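/- Let q ≥ 2, k natural with 2q ≤ 2^k, μ = ⌊2^(2k)/q⌋, c < 2^(2k), and r = c - ⌊c·μ/2^(2k)⌋·q the Barrett remainder. Define ρ by: if r ≥ q then ρ = r - q else ρ = r; and then if ρ ≥ q then replace ρ by ρ - q. Then ρ = c mod q. -/

import Mathlib

/-!
Write `μ = ⌊N/q⌋` with `N = 2^(2k)`. Since `N - q < qμ ≤ N`, the estimate `⌊cμ/N⌋` never exceeds
`⌊c/q⌋` and, as long as `c < N`, falls short of it by at most one. Hence the Barrett remainder is
congruent to `c` modulo `q` and lies in `[0, 2q)`, and conditional subtractions of `q` reduce any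
such number below `3q` to its residue.
-/

namespace Nat

theorem mul_div_div_le_div (c N q : ℕ) : c * (N / q) / N ≤ c / q := by
  rcases N.eq_zero_or_pos with rfl | hN
  · simp
  calc c * (N / q) / N ≤ c * N / q / N := Nat.div_le_div_right (Nat.mul_div_le_mul_div_assoc c N q)
    _ = c / q := by rw [Nat.div_div_eq_div_mul, Nat.mul_div_mul_right c q hN]

theorem div_le_mul_div_div_add_one {c N : ℕ} (q : ℕ) (hc : c < N) :
    c / q ≤ c * (N / q) / N + 1 := by
  have hN : 0 < N := by omega
  set a := c / q
  set μ := N / q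
  set m := c * μ / N
  have haq : a * q ≤ c := Nat.div_mul_le_self c q
  have hs : a * (N % q) ≤ c := by
    rcases q.eq_zero_or_pos with rfl | hq
    · simp [a]
    exact (Nat.mul_le_mul_left a (Nat.mod_lt N hq).le).trans haq
  have hcμ : c * μ < m * N + N := Nat.lt_div_mul_add hN
  suffices a * N < (m + 2) * N by have := Nat.lt_of_mul_lt_mul_right this; omega
  calc a * N = a * q * μ + a * (N % q) := by
        conv_lhs => rw [← Nat.div_add_mod N q]
        ring
    _ ≤ c * μ + c := by gcongr
    _ < (m + 2) * N := by nlinarith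

theorem ite_le_sub_eq_mod {r q : ℕ} (h : r < 2 * q) : (if q ≤ r then r - q else r) = r % q := by
  split_ifs with hqr
  · rw [Nat.mod_eq_sub_mod hqr, Nat.mod_eq_of_lt (by omega)]
  · rw [Nat.mod_eq_of_lt (by omega)]

theorem ite_le_sub_ite_le_sub_eq_mod {r q : ℕ} (h : r < 3 * q) :
    (let ρ := if q ≤ r then r - q else r; if q ≤ ρ then ρ - q else ρ) = r % q := by
  by_cases hqr : q ≤ r
  · simp only [if_pos hqr]
    rw [ite_le_sub_eq_mod (by omega), ← Nat.mod_eq_sub_mod hqr]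
  · simp only [if_neg hqr]
    rw [Nat.mod_eq_of_lt (by omega)]

end Nat

theorem barrett_two_subtractions_general (q k c : ℕ)
    (hc : c < 2 ^ (2 * k)) :
    (let r := c - ((c * (2 ^ (2 * k) / q)) / 2 ^ (2 * k)) * q;
     let ρ₁ := if q ≤ r then r - q else r;
     if q ≤ ρ₁ then ρ₁ - q else ρ₁) = c % q := by
  rcases q.eq_zero_or_pos with rfl | hq
  · simp
  set m := c * (2 ^ (2 * k) / q) / 2 ^ (2 * k)
  have hm_le : m ≤ c / q := Nat.mul_div_div_le_div c _ q
  have hm_ge : c / q ≤ m + 1 := Nat.div_le_mul_div_div_add_one q hc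
  have hmq : m * q ≤ c := (Nat.mul_le_mul_right q hm_le).trans (Nat.div_mul_le_self c q)
  have hr_lt : c - m * q < 3 * q := by
    have : c / q * q ≤ m * q + q := by simpa [Nat.add_one_mul] using Nat.mul_le_mul_right q hm_ge
    have := Nat.lt_div_mul_add (a := c) hq
    omega
  rw [Nat.ite_le_sub_ite_le_sub_eq_mod hr_lt, Nat.mul_comm m q, Nat.sub_mul_mod (by rwa [Nat.mul_comm])]

theorem barrett_two_subtractions (q k c : ℕ) (hq : 2 ≤ q) (hqk : 2 * q ≤ 2 ^ k)
    (hc : c < 2 ^ (2 * k)) :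
    (let r := c - ((c * (2 ^ (2 * k) / q)) / 2 ^ (2 * k)) * q;
     let ρ₁ := if q ≤ r then r - q else r;
     if q ≤ ρ₁ then ρ₁ - q else ρ₁) = c % q :=
  barrett_two_subtractions_general q k c hc
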